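/- Let n ≥ 2, a ∈ ℝ, ν ∈ ℝ, ε ∈ {0,1}, and fix y ∈ ℝ^{n-1}. Define the complex-valued function K on {x ∈ ℝⁿ : x_n ≠ 0} by K(x) = sgn(x_n)^ε |x_n|^{(1-a)/2 - iν} (|x'-y|² + x_n²)^{-((n-1)/2 - iν)}, where complex powers of positive reals are defined via the real logarithm and x = (x', x_n). Then Δ_a K(x) = −( ((1−a)/2)² + ν² ) K(x) for every x with x_n ≠ 0. -/

import Mathlib

/-- Directional derivative: `pd v u x = (fderiv ℝ u x) v`. -/
noncomputable def pd {E F : Type*} [NormedAddCommGroup E] [NormedSpace ℝ E]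
    [NormedAddCommGroup F] [NormedSpace ℝ F] (v : E) (u : E → F) (x : E) : F :=
  fderiv ℝ u x v

/-- The operator `Δ_a u = x_n² Δu + a x_n ∂u/∂x_n` on `ℝⁿ = ℝ^m × ℝ` (complex valued,
i.e. applied componentwise on real and imaginary parts). -/
noncomputable def deltaA (m : ℕ) (a : ℝ) (u : (Fin m → ℝ) × ℝ → ℂ)
    (x : (Fin m → ℝ) × ℝ) : ℂ :=
  ((x.2 ^ 2 : ℝ) : ℂ) *
      ((∑ j, pd (Pi.single j 1, (0 : ℝ)) (pd (Pi.single j 1, (0 : ℝ)) u) x)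
        + pd ((0 : Fin m → ℝ), (1 : ℝ)) (pd ((0 : Fin m → ℝ), (1 : ℝ)) u) x)
    + ((a * x.2 : ℝ) : ℂ) * pd ((0 : Fin m → ℝ), (1 : ℝ)) u x

/-- The kernel `K(x) = sgn(x_n)^ε |x_n|^{(1-a)/2 - iν} (|x'-y|² + x_n²)^{-((n-1)/2 - iν)}`,
complex powers of positive reals being defined via the real logarithm. -/
noncomputable def kerKnu (n : ℕ) (a ν : ℝ) (ε : ℕ) (y : Fin (n - 1) → ℝ)
    (x : (Fin (n - 1) → ℝ) × ℝ) : ℂ :=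
  ((Real.sign x.2 ^ ε : ℝ) : ℂ) *
    Complex.exp ((((1 - a) / 2 : ℝ) - (ν : ℂ) * Complex.I) * ((Real.log |x.2| : ℝ) : ℂ)) *
    Complex.exp ((-((((n : ℝ) - 1) / 2 : ℝ)) + (ν : ℂ) * Complex.I) *
      ((Real.log ((∑ j, (x.1 j - y j) ^ 2) + x.2 ^ 2) : ℝ) : ℂ))

/-!
Write `K = sgn(x_n)^ε · x_n^α |x - (y,0)|^{2β}` with `α = (1-a)/2 - iν` and
`β = -(n-1)/2 + iν`; the sign factor is locally constant. Along each coordinate line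
`x + t e`, both `x_n` and `|x - (y,0)|²` are polynomials of degree at most two in `t`, so `K`
restricts to `exp (α log p + β log q)` with `p, q` quadratic. Then `(e^ψ)'' = e^ψ (ψ'² + ψ'')`
and `(log p)''(0) = (2 p₂ p₀ - p₁²) / p₀²` for `p = p₂ t² + p₁ t + p₀` compute every term
of `Δ_a K`. Summing gives
`Δ_a K = K · (α² + (a-1)α + x_n² / |x-(y,0)|² · 2β (2β + n - 2 + 2α + a))`,
and for these exponents the last factor vanishes while `α² + (a-1)α = -(((1-a)/2)² + ν²)`.
-/

open Filter Topology

section LineRestriction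

variable {E F : Type*} [NormedAddCommGroup E] [NormedSpace ℝ E]
  [NormedAddCommGroup F] [NormedSpace ℝ F] {u : E → F} {x : E}

theorem pd_eq_deriv_comp_line (hu : DifferentiableAt ℝ u x) (v : E) :
    pd v u x = deriv (fun t : ℝ => u (x + t • v)) 0 :=
  hu.lineDeriv_eq_fderiv.symm

theorem pd_pd_eq_deriv_deriv_comp_line (hu : ContDiffAt ℝ 2 u x) (v : E) :
    pd v (pd v u) x = deriv (deriv fun t : ℝ => u (x + t • v)) 0 := by
  have hline : Tendsto (fun t : ℝ => x + t • v) (𝓝 0) (𝓝 x) := by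
    have hc : Continuous fun t : ℝ => x + t • v := by fun_prop
    simpa using hc.tendsto 0
  have hnear : deriv (fun t : ℝ => u (x + t • v)) =ᶠ[𝓝 0] fun t => pd v u (x + t • v) := by
    filter_upwards [hline.eventually (hu.eventually (by simp))] with t ht
    rw [pd_eq_deriv_comp_line (ht.differentiableAt two_ne_zero)]
    simpa only [zero_add, add_smul, add_assoc, add_comm (t • v)] using
      (deriv_comp_add_const (f := fun s : ℝ => u (x + s • v)) (a := t) (x := 0)).symm
  have hpd : DifferentiableAt ℝ (pd v u) x :=
    ((hu.fderiv_right (m := 1) le_rfl).differentiableAt one_ne_zero).clm_apply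
      (differentiableAt_const v)
  rw [hnear.deriv_eq, ← pd_eq_deriv_comp_line hpd]

theorem pd_const_smul (c : ℂ) (u : E → ℂ) (v : E) : pd v (c • u) = c • pd v u := by
  ext z
  simp [pd, fderiv_const_smul_field]

end LineRestriction

theorem deltaA_const_smul {m : ℕ} (a : ℝ) (c : ℂ) (u : (Fin m → ℝ) × ℝ → ℂ)
    (x : (Fin m → ℝ) × ℝ) :
    deltaA m a (c • u) x = c * deltaA m a u x := by
  simp only [deltaA, pd_const_smul, Pi.smul_apply, smul_eq_mul, ← Finset.mul_sum]
  ring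

theorem Filter.EventuallyEq.deltaA_eq {m : ℕ} {a : ℝ} {u w : (Fin m → ℝ) × ℝ → ℂ}
    {x : (Fin m → ℝ) × ℝ} (h : u =ᶠ[𝓝 x] w) : deltaA m a u x = deltaA m a w x := by
  have hpd : ∀ v, pd v u =ᶠ[𝓝 x] pd v w := fun v =>
    (h.fderiv (𝕜 := ℝ)).mono fun z hz => by simp only [pd, hz]
  simp only [deltaA, pd, (hpd _).fderiv_eq, h.fderiv_eq]

section OneVariable

theorem hasDerivAt_quadratic (a b c s : ℝ) :
    HasDerivAt (fun s => a * s ^ 2 + b * s + c) (2 * a * s + b) s :=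
  ((((hasDerivAt_pow 2 s).const_mul a).fun_add ((hasDerivAt_id s).const_mul b)).add_const
    c).congr_deriv (by simp; ring)

theorem hasDerivAt_logDeriv_quadratic (a b : ℝ) {c : ℝ} (hc : c ≠ 0) :
    HasDerivAt (fun s => (2 * a * s + b) / (a * s ^ 2 + b * s + c))
      ((2 * a * c - b ^ 2) / c ^ 2) 0 := by
  have hnum : HasDerivAt (fun s : ℝ => 2 * a * s + b) (2 * a) 0 :=
    (((hasDerivAt_id (0 : ℝ)).const_mul (2 * a)).add_const b).congr_deriv (by simp)
  exact (hnum.fun_div (hasDerivAt_quadratic a b c 0) (by simpa using hc)).congr_deriv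
    (by simp; ring)

theorem deriv_deriv_cexp_of_hasDerivAt {ψ ψ' : ℝ → ℂ} {ψ'' : ℂ} {t : ℝ}
    (h₁ : ∀ᶠ s in 𝓝 t, HasDerivAt ψ (ψ' s) s) (h₂ : HasDerivAt ψ' ψ'' t) :
    deriv (deriv fun s => Complex.exp (ψ s)) t
      = Complex.exp (ψ t) * (ψ' t ^ 2 + ψ'') := by
  have hd : deriv (fun s => Complex.exp (ψ s)) =ᶠ[𝓝 t] fun s => Complex.exp (ψ s) * ψ' s :=
    h₁.mono fun s hs => hs.cexp.deriv
  rw [hd.deriv_eq, ((h₁.self_of_nhds.cexp).fun_mul h₂).deriv]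
  ring

end OneVariable

section LogQuadratic

variable (α β : ℂ) (a₁ b₁ c₁ a₂ b₂ c₂ : ℝ)

theorem eventually_hasDerivAt_log_quadratic_comb (hc₁ : c₁ ≠ 0) (hc₂ : c₂ ≠ 0) :
    ∀ᶠ s in 𝓝 (0 : ℝ), HasDerivAt
      (fun s : ℝ => α * Real.log (a₁ * s ^ 2 + b₁ * s + c₁)
        + β * Real.log (a₂ * s ^ 2 + b₂ * s + c₂))
      (α * ((2 * a₁ * s + b₁) / (a₁ * s ^ 2 + b₁ * s + c₁) : ℝ)
        + β * ((2 * a₂ * s + b₂) / (a₂ * s ^ 2 + b₂ * s + c₂) : ℝ)) s := by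
  have hne : ∀ a b c : ℝ, c ≠ 0 → ∀ᶠ s in 𝓝 (0 : ℝ), a * s ^ 2 + b * s + c ≠ 0 := fun a b c hc =>
    (hasDerivAt_quadratic a b c 0).continuousAt.eventually_ne (by simpa using hc)
  filter_upwards [hne a₁ b₁ c₁ hc₁, hne a₂ b₂ c₂ hc₂] with s hs₁ hs₂
  exact (((hasDerivAt_quadratic a₁ b₁ c₁ s).log hs₁).ofReal_comp.const_mul α).fun_add
    (((hasDerivAt_quadratic a₂ b₂ c₂ s).log hs₂).ofReal_comp.const_mul β)

theorem deriv_cexp_log_quadratic_comb (hc₁ : c₁ ≠ 0) (hc₂ : c₂ ≠ 0) :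
    deriv (fun s : ℝ => Complex.exp (α * Real.log (a₁ * s ^ 2 + b₁ * s + c₁)
        + β * Real.log (a₂ * s ^ 2 + b₂ * s + c₂))) 0
      = Complex.exp (α * Real.log c₁ + β * Real.log c₂)
        * (α * (b₁ / c₁ : ℝ) + β * (b₂ / c₂ : ℝ)) := by
  have h₁ := eventually_hasDerivAt_log_quadratic_comb α β a₁ b₁ c₁ a₂ b₂ c₂ hc₁ hc₂
  rw [h₁.self_of_nhds.cexp.deriv]
  simp

theorem deriv_deriv_cexp_log_quadratic_comb (hc₁ : c₁ ≠ 0) (hc₂ : c₂ ≠ 0) :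
    deriv (deriv fun s : ℝ => Complex.exp (α * Real.log (a₁ * s ^ 2 + b₁ * s + c₁)
        + β * Real.log (a₂ * s ^ 2 + b₂ * s + c₂))) 0
      = Complex.exp (α * Real.log c₁ + β * Real.log c₂)
        * ((α * (b₁ / c₁ : ℝ) + β * (b₂ / c₂ : ℝ)) ^ 2
          + α * ((2 * a₁ * c₁ - b₁ ^ 2) / c₁ ^ 2 : ℝ)
          + β * ((2 * a₂ * c₂ - b₂ ^ 2) / c₂ ^ 2 : ℝ)) := by
  have h₂ := ((hasDerivAt_logDeriv_quadratic a₁ b₁ hc₁).ofReal_comp.const_mul α).fun_add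
    ((hasDerivAt_logDeriv_quadratic a₂ b₂ hc₂).ofReal_comp.const_mul β)
  rw [deriv_deriv_cexp_of_hasDerivAt
    (eventually_hasDerivAt_log_quadratic_comb α β a₁ b₁ c₁ a₂ b₂ c₂ hc₁ hc₂) h₂]
  simp [add_assoc]

end LogQuadratic

section KernelModel

variable {m : ℕ}

def sqDist (y : Fin m → ℝ) (z : (Fin m → ℝ) × ℝ) : ℝ := (∑ j, (z.1 j - y j) ^ 2) + z.2 ^ 2

theorem sqDist_pos (y : Fin m → ℝ) {z : (Fin m → ℝ) × ℝ} (hz : z.2 ≠ 0) : 0 < sqDist y z :=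
  add_pos_of_nonneg_of_pos (Finset.sum_nonneg fun j _ => sq_nonneg _) (by positivity)

theorem sqDist_add_smul_single (y : Fin m → ℝ) (x : (Fin m → ℝ) × ℝ) (j : Fin m) (t : ℝ) :
    sqDist y (x + t • (Pi.single j 1, 0)) = t ^ 2 + 2 * (x.1 j - y j) * t + sqDist y x := by
  have hterm : ∀ i, (x.1 i + t * (Pi.single j 1 : Fin m → ℝ) i - y i) ^ 2
      = (x.1 i - y i) ^ 2 + (Pi.single j (t ^ 2 + 2 * (x.1 j - y j) * t) : Fin m → ℝ) i := by
    intro i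
    rcases eq_or_ne i j with rfl | hij
    · simp; ring
    · simp [hij]
  simp only [sqDist, Prod.fst_add, Prod.snd_add, Prod.smul_fst, Prod.smul_snd, Pi.add_apply,
    Pi.smul_apply, smul_eq_mul, mul_zero, add_zero, hterm, Finset.sum_add_distrib,
    Finset.sum_pi_single', Finset.mem_univ, if_true]
  ring

theorem sqDist_add_smul_last (y : Fin m → ℝ) (x : (Fin m → ℝ) × ℝ) (t : ℝ) :
    sqDist y (x + t • (0, 1)) = t ^ 2 + 2 * x.2 * t + sqDist y x := by
  simp only [sqDist, Prod.fst_add, Prod.snd_add, Prod.smul_fst, Prod.smul_snd, smul_zero,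
    add_zero, smul_eq_mul, mul_one]
  ring

variable (α β : ℂ) (y : Fin m → ℝ)

-- `Real.log z.2 = log |z.2|`, so this is `|z_n|^α |z - (y,0)|^{2β}` on both sides of `z_n = 0`.
noncomputable def kernelModel (z : (Fin m → ℝ) × ℝ) : ℂ :=
  Complex.exp (α * Real.log z.2 + β * Real.log (sqDist y z))

theorem contDiffAt_kernelModel {x : (Fin m → ℝ) × ℝ} (hx : x.2 ≠ 0) :
    ContDiffAt ℝ 2 (kernelModel α β y) x := by
  have hQ : ContDiff ℝ 2 (sqDist y) := by unfold sqDist; fun_prop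
  have hlog₁ := (contDiffAt_snd (𝕜 := ℝ) (E := Fin m → ℝ) (F := ℝ) (n := 2) (p := x)).log hx
  have hlog₂ := hQ.contDiffAt.log (sqDist_pos y hx).ne'
  exact ((contDiffAt_const.mul (Complex.ofRealCLM.contDiff.contDiffAt.comp x hlog₁)).add
    (contDiffAt_const.mul (Complex.ofRealCLM.contDiff.contDiffAt.comp x hlog₂))).cexp

variable (x : (Fin m → ℝ) × ℝ)

theorem kernelModel_add_smul_single (j : Fin m) (t : ℝ) :
    kernelModel α β y (x + t • (Pi.single j 1, 0))
      = Complex.exp (α * Real.log (0 * t ^ 2 + 0 * t + x.2)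
        + β * Real.log (1 * t ^ 2 + 2 * (x.1 j - y j) * t + sqDist y x)) := by
  rw [kernelModel, sqDist_add_smul_single]
  simp

theorem kernelModel_add_smul_last (t : ℝ) :
    kernelModel α β y (x + t • (0, 1))
      = Complex.exp (α * Real.log (0 * t ^ 2 + 1 * t + x.2)
        + β * Real.log (1 * t ^ 2 + 2 * x.2 * t + sqDist y x)) := by
  rw [kernelModel, sqDist_add_smul_last]
  simp [add_comm t]

theorem deltaA_kernelModel (a : ℝ) (hx : x.2 ≠ 0) :
    deltaA m a (kernelModel α β y) x = kernelModel α β y x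
      * (α ^ 2 + (a - 1) * α
        + (x.2 ^ 2 / sqDist y x : ℝ) * (4 * β ^ 2 + 2 * β * (m + 2 * α + a - 1))) := by
  have hQ := (sqDist_pos y hx).ne'
  have hC := contDiffAt_kernelModel α β y hx
  simp only [deltaA, pd_pd_eq_deriv_deriv_comp_line hC,
    pd_eq_deriv_comp_line (hC.differentiableAt two_ne_zero), kernelModel_add_smul_single,
    kernelModel_add_smul_last, deriv_cexp_log_quadratic_comb _ _ _ _ _ _ _ _ hx hQ,
    deriv_deriv_cexp_log_quadratic_comb _ _ _ _ _ _ _ _ hx hQ]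
  set Q := sqDist y x with hQdef
  have hK : Complex.exp (α * Real.log x.2 + β * Real.log Q) = kernelModel α β y x := rfl
  have hR : ((∑ j, (x.1 j - y j) ^ 2 : ℝ) : ℂ) = Q - x.2 ^ 2 := by
    rw [hQdef, sqDist]; push_cast; ring
  have hsum : ∑ j, ((α * ((0 / x.2 : ℝ) : ℂ) + β * ((2 * (x.1 j - y j) / Q : ℝ) : ℂ)) ^ 2
        + α * (((2 * 0 * x.2 - 0 ^ 2) / x.2 ^ 2 : ℝ) : ℂ)
        + β * (((2 * 1 * Q - (2 * (x.1 j - y j)) ^ 2) / Q ^ 2 : ℝ) : ℂ))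
      = (4 * β ^ 2 - 4 * β) / (Q : ℂ) ^ 2 * (Q - x.2 ^ 2) + m * (2 * β / Q) := by
    calc _ = ∑ j, ((4 * β ^ 2 - 4 * β) / (Q : ℂ) ^ 2 * ((x.1 j - y j : ℝ) : ℂ) ^ 2
            + 2 * β / Q) := Finset.sum_congr rfl fun j _ => by push_cast; field_simp; ring
      _ = _ := by
        rw [Finset.sum_add_distrib, ← Finset.mul_sum, Finset.sum_const, Finset.card_univ,
          Fintype.card_fin, nsmul_eq_mul, ← hR]
        push_cast
        rfl
  have hQc : (Q : ℂ) ≠ 0 := Complex.ofReal_ne_zero.mpr hQ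
  have hxc : (x.2 : ℂ) ≠ 0 := Complex.ofReal_ne_zero.mpr hx
  rw [hK, ← Finset.mul_sum, hsum]
  push_cast
  field_simp
  ring

end KernelModel

theorem Real.eventually_sign_eq {t : ℝ} (ht : t ≠ 0) :
    ∀ᶠ s in 𝓝 t, Real.sign s = Real.sign t := by
  rcases ht.lt_or_gt with h | h
  · filter_upwards [eventually_lt_nhds h] with s hs
    rw [Real.sign_of_neg hs, Real.sign_of_neg h]
  · filter_upwards [eventually_gt_nhds h] with s hs
    rw [Real.sign_of_pos hs, Real.sign_of_pos h]

theorem kerKnu_eventuallyEq_kernelModel (n : ℕ) (a ν : ℝ) (ε : ℕ) (y : Fin (n - 1) → ℝ)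
    {x : (Fin (n - 1) → ℝ) × ℝ} (hx : x.2 ≠ 0) :
    kerKnu n a ν ε y =ᶠ[𝓝 x] ((Real.sign x.2 ^ ε : ℝ) : ℂ) •
      kernelModel (((1 - a) / 2 : ℝ) - ν * Complex.I)
        (-(((n - 1) / 2 : ℝ) : ℂ) + ν * Complex.I) y := by
  filter_upwards [continuous_snd.continuousAt.eventually (Real.eventually_sign_eq hx)] with z hz
  simp only [kerKnu, kernelModel, sqDist, Pi.smul_apply, smul_eq_mul, Real.log_abs, hz,
    Complex.exp_add, mul_assoc]

theorem statement6_general (n : ℕ) (hn : 2 ≤ n) (a ν : ℝ) (ε : ℕ)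
    (y : Fin (n - 1) → ℝ) (x : (Fin (n - 1) → ℝ) × ℝ) (hx : x.2 ≠ 0) :
    deltaA (n - 1) a (kerKnu n a ν ε y) x
      = -(((((1 - a) / 2) ^ 2 + ν ^ 2 : ℝ)) : ℂ) * kerKnu n a ν ε y x := by
  have hK := kerKnu_eventuallyEq_kernelModel n a ν ε y hx
  have hm : ((n - 1 : ℕ) : ℂ) = n - 1 := by rw [Nat.cast_sub (by omega)]; simp
  rw [hK.deltaA_eq, hK.self_of_nhds, deltaA_const_smul, deltaA_kernelModel _ _ _ _ _ hx, hm,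
    Pi.smul_apply, smul_eq_mul]
  push_cast
  -- the `β`-coefficient vanishes identically, and `α² + (a-1)α + ((1-a)/2)² + ν² = ν² (I² + 1)`
  linear_combination
    (Real.sign x.2 ^ ε : ℂ) * kernelModel _ _ y x * ν ^ 2 * Complex.I_sq

/-- For every `x` with `x_n ≠ 0`, `Δ_a K(x) = −(((1−a)/2)² + ν²) K(x)`. -/
theorem statement6 (n : ℕ) (hn : 2 ≤ n) (a ν : ℝ) (ε : ℕ) (hε : ε = 0 ∨ ε = 1)
    (y : Fin (n - 1) → ℝ) (x : (Fin (n - 1) → ℝ) × ℝ) (hx : x.2 ≠ 0) :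
    deltaA (n - 1) a (kerKnu n a ν ε y) x
      = -(((((1 - a) / 2) ^ 2 + ν ^ 2 : ℝ)) : ℂ) * kerKnu n a ν ε y x :=
  statement6_general n hn a ν ε y x hx
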